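/- In the braid group B_4, the word σ1 σ1 σ2⁻¹ σ1 σ3 σ2⁻¹ σ1 σ3 σ2 σ2 σ3 (a braid representative of the knot 11n174) equals the product of the positive bands of its band decomposition with band centers {1, 2, 4, 5, 7, 8, 11}; in particular, this braid is quasipositive. -/

import Mathlib

/-- The Artin relations for the braid group with `m` generators
`σ_1, …, σ_m` (indexed by `Fin m`), i.e. the braid group `B_{m+1}`:
`σ_i σ_j = σ_j σ_i` for `|i - j| ≥ 2`, and
`σ_i σ_{i+1} σ_i = σ_{i+1} σ_i σ_{i+1}`. -/
def braidRels (m : ℕ) : Set (FreeGroup (Fin m)) :=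
  { r | (∃ i j : Fin m, (i : ℕ) + 2 ≤ (j : ℕ) ∧
          r = FreeGroup.of i * FreeGroup.of j * (FreeGroup.of i)⁻¹ * (FreeGroup.of j)⁻¹) ∨
        (∃ i j : Fin m, (i : ℕ) + 1 = (j : ℕ) ∧
          r = FreeGroup.of i * FreeGroup.of j * FreeGroup.of i *
              (FreeGroup.of j)⁻¹ * (FreeGroup.of i)⁻¹ * (FreeGroup.of j)⁻¹) }

/-- The braid group `B_{m+1}`, presented with `m` Artin generators.
Here index `i : Fin m` corresponds to the Artin generator `σ_{i+1}`. -/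
abbrev BraidGrp (m : ℕ) := PresentedGroup (braidRels m)

/-- The Artin generator `σ_{i+1}` of the braid group `B_{m+1}`. -/
def σ {m : ℕ} (i : Fin m) : BraidGrp m := PresentedGroup.of i

/-- A letter of a braid word: a generator index together with a sign
(`true` = the positive generator, `false` = its inverse). -/
abbrev Letter (m : ℕ) := Fin m × Bool

/-- The group element represented by a letter. -/
def letterEl {m : ℕ} (x : Letter m) : BraidGrp m :=
  if x.2 then σ x.1 else (σ x.1)⁻¹

/-- The group element represented by a braid word. -/
def wordProd {m : ℕ} (w : List (Letter m)) : BraidGrp m :=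
  (w.map letterEl).prod

/-- The band of the band decomposition of the word `w` with band centers `S`
(1-based positions) at center `p`: namely `α_p * x_p * α_p⁻¹`, where `x_p` is
the letter of `w` at position `p` and `α_p` is the product, in increasing
order of position, of the letters of `w` at positions `q < p` with `q ∉ S`. -/
def band {m : ℕ} (w : List (Letter m)) (S : List ℕ) (p : ℕ) : BraidGrp m :=
  let α : BraidGrp m :=
    wordProd (((w.zipIdx.map Prod.swap).filter fun qx => decide (qx.1 + 1 < p ∧ qx.1 + 1 ∉ S)).map Prod.snd)
  match w[p - 1]? with
  | some x => α * letterEl x * α⁻¹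
  | none => 1

/-- The product, in increasing order of band center, of the bands of the
band decomposition of the word `w` with band centers `S`. -/
def bandProd {m : ℕ} (w : List (Letter m)) (S : List ℕ) : BraidGrp m :=
  (S.map (band w S)).prod

/-- A positive band in the braid group: a conjugate `α σ_j α⁻¹` of a generator. -/
def IsPositiveBand {m : ℕ} (x : BraidGrp m) : Prop :=
  ∃ (α : BraidGrp m) (j : Fin m), x = α * σ j * α⁻¹

/-- A braid is quasipositive if it is a product of positive bands. -/
def IsQuasipositive {m : ℕ} (x : BraidGrp m) : Prop :=
  ∃ l : List (BraidGrp m), (∀ b ∈ l, IsPositiveBand b) ∧ x = l.prod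

/-- A negative band in the braid group: a conjugate `α σ_j⁻¹ α⁻¹` of the
inverse of a generator. -/
def IsNegativeBand {m : ℕ} (x : BraidGrp m) : Prop :=
  ∃ (α : BraidGrp m) (j : Fin m), x = α * (σ j)⁻¹ * α⁻¹

/-- A braid is quasinegative if it is a product of negative bands. -/
def IsQuasinegative {m : ℕ} (x : BraidGrp m) : Prop :=
  ∃ l : List (BraidGrp m), (∀ b ∈ l, IsNegativeBand b) ∧ x = l.prod

/-- The braid word for the knot `11n174` (letter `(i, true)` is `σ_(i+1)`,
`(i, false)` is `σ_(i+1)⁻¹`). -/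
def theWord : List (Letter 3) :=
  [(0, true), (0, true), (1, false), (0, true), (2, true), (1, false), (0, true), (2, true), (1, true), (1, true), (2, true)]

/-- The band centers. -/
def theCenters : List ℕ := [1, 2, 4, 5, 7, 8, 11]

/-! Consecutive bands `b_p b_{p'}` meet in `α_p⁻¹ α_{p'}`, the word of off-center letters strictly
between `p` and `p'`, so the product of the bands telescopes to `w β⁻¹`, where `β` is the word of
all off-center letters. For `11n174` this is `σ₂⁻¹ σ₂⁻¹ σ₂ σ₂`, trivial already in the free group. -/

theorem List.filter_le_add_one_of_pairwise_lt {S : List ℕ} (hS : S.Pairwise (· < ·)) (n : ℕ) :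
    S.filter (· ≤ n + 1) = S.filter (· ≤ n) ++ if n + 1 ∈ S then [n + 1] else [] := by
  induction S with
  | nil => simp
  | cons a t ih =>
    obtain ⟨hat, ht⟩ := List.pairwise_cons.1 hS
    rcases lt_trichotomy a (n + 1) with ha | rfl | ha
    · have hmem : n + 1 ∈ a :: t ↔ n + 1 ∈ t := by simp [ha.ne']
      simp only [List.filter_cons, ih ht, hmem]
      simp [Nat.le_of_lt_succ ha, ha.le]
    · have hnil : ∀ k ≤ n + 1, t.filter (· ≤ k) = [] := fun k hk =>
        List.filter_eq_nil_iff.2 fun b hb => by simpa using (hat b hb).trans_le' hk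
      simp [hnil]
    · have hmem : n + 1 ∉ a :: t := fun h => by
        rcases List.mem_cons.1 h with h | h
        · omega
        · exact absurd (hat _ h) (by omega)
      have hnil : ∀ k ≤ n + 1, (a :: t).filter (· ≤ k) = [] := fun k hk =>
        List.filter_eq_nil_iff.2 fun b hb => by
          rcases List.mem_cons.1 hb with rfl | hb
          · simpa using hk.trans_lt ha
          · simpa using (hat b hb).trans_le' (by omega)
      rw [hnil _ le_rfl, hnil _ (by omega), if_neg hmem]; rfl

section BandDecomposition

variable {m : ℕ} (w : List (Letter m)) (S : List ℕ)

/-- The word whose product is the conjugator `α_p` of `band w S p`. -/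
def offCenterPrefix (p : ℕ) : List (Letter m) :=
  ((w.zipIdx.map Prod.swap).filter fun qx => decide (qx.1 + 1 < p ∧ qx.1 + 1 ∉ S)).map Prod.snd

theorem band_of_getElem?_eq_some {p : ℕ} {x : Letter m} (hx : w[p - 1]? = some x) :
    band w S p = wordProd (offCenterPrefix w S p) * letterEl x *
      (wordProd (offCenterPrefix w S p))⁻¹ := by
  simp only [band, hx, offCenterPrefix]

theorem offCenterPrefix_append_singleton (x : Letter m) (p : ℕ) :
    offCenterPrefix (w ++ [x]) S p =
      offCenterPrefix w S p ++ if w.length + 1 < p ∧ w.length + 1 ∉ S then [x] else [] := by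
  simp only [offCenterPrefix, List.zipIdx_append, List.map_append, List.filter_append]
  split_ifs with h <;> simp [h]

theorem offCenterPrefix_of_length_lt {p : ℕ} (hp : w.length < p) :
    offCenterPrefix w S p = offCenterPrefix w S (w.length + 1) := by
  unfold offCenterPrefix
  congr 1
  refine List.filter_congr fun qx hqx => ?_
  obtain ⟨⟨x, q⟩, hmem, rfl⟩ := List.mem_map.1 hqx
  have := (List.mem_zipIdx' hmem).1
  simp only [Prod.swap_prod_mk]
  congr 2
  exact propext ⟨fun _ => by omega, fun _ => by omega⟩

theorem band_append_singleton_of_le (x : Letter m) {p : ℕ} (hp0 : 0 < p) (hp : p ≤ w.length) :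
    band (w ++ [x]) S p = band w S p := by
  have hget : (w ++ [x])[p - 1]? = w[p - 1]? := List.getElem?_append_left (by omega)
  have hpre : offCenterPrefix (w ++ [x]) S p = offCenterPrefix w S p := by
    rw [offCenterPrefix_append_singleton, if_neg (by omega), List.append_nil]
  obtain ⟨y, hy⟩ : ∃ y, w[p - 1]? = some y := ⟨_, List.getElem?_eq_getElem (by omega)⟩
  rw [band_of_getElem?_eq_some _ _ hy, band_of_getElem?_eq_some _ _ (hget.trans hy), hpre]

theorem band_append_singleton_length_add_one (x : Letter m) :
    band (w ++ [x]) S (w.length + 1) = wordProd (offCenterPrefix w S (w.length + 1)) *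
      letterEl x * (wordProd (offCenterPrefix w S (w.length + 1)))⁻¹ := by
  rw [band_of_getElem?_eq_some (x := x) _ _ (by simp), offCenterPrefix_append_singleton,
    if_neg (by omega), List.append_nil]

end BandDecomposition

theorem prod_band_filter_le_length {m : ℕ} (w : List (Letter m)) {S : List ℕ}
    (hS : S.Pairwise (· < ·)) (hpos : ∀ p ∈ S, 0 < p) :
    ((S.filter (· ≤ w.length)).map (band w S)).prod =
      wordProd w * (wordProd (offCenterPrefix w S (w.length + 1)))⁻¹ := by
  induction w using List.reverseRecOn with
  | nil =>
    have : S.filter (· ≤ 0) = [] :=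
      List.filter_eq_nil_iff.2 fun p hp => by simpa using (hpos p hp).ne'
    rw [List.length_nil, this]
    simp [wordProd, offCenterPrefix]
  | append_singleton w x ih =>
    have hold : ((S.filter (· ≤ w.length)).map (band (w ++ [x]) S)) =
        (S.filter (· ≤ w.length)).map (band w S) :=
      List.map_congr_left fun p hp => by
        have := List.mem_filter.1 hp
        exact band_append_singleton_of_le w S x (hpos p this.1) (by simpa using this.2)
    have hstable : offCenterPrefix w S (w.length + 1 + 1) = offCenterPrefix w S (w.length + 1) :=
      offCenterPrefix_of_length_lt w S (by omega)
    rw [List.length_append, List.length_singleton, List.filter_le_add_one_of_pairwise_lt hS,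
      List.map_append, List.prod_append, hold, ih, offCenterPrefix_append_singleton, hstable]
    by_cases hx : w.length + 1 ∈ S
    · simp [hx, band_append_singleton_length_add_one, wordProd, mul_assoc]
    · simp [hx, wordProd, mul_assoc]

theorem bandProd_eq_wordProd_mul_inv {m : ℕ} (w : List (Letter m)) {S : List ℕ}
    (hS : S.Pairwise (· < ·)) (hpos : ∀ p ∈ S, 0 < p) (hle : ∀ p ∈ S, p ≤ w.length) :
    bandProd w S = wordProd w * (wordProd (offCenterPrefix w S (w.length + 1)))⁻¹ := by
  rw [← prod_band_filter_le_length w hS hpos, List.filter_eq_self.2 (by simpa using hle)]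
  rfl

theorem isQuasipositive_bandProd {m : ℕ} (w : List (Letter m)) (S : List ℕ)
    (hS : ∀ p ∈ S, ∃ j, w[p - 1]? = some (j, true)) : IsQuasipositive (bandProd w S) := by
  refine ⟨S.map (band w S), fun b hb => ?_, rfl⟩
  obtain ⟨p, hp, rfl⟩ := List.mem_map.1 hb
  obtain ⟨j, hj⟩ := hS p hp
  exact ⟨_, j, band_of_getElem?_eq_some w S hj⟩

/-- The braid representative of `11n174` equals the product of the bands of its
band decomposition with the given band centers; in particular it is quasipositive. -/
theorem knot_11n174_quasipositive :
    wordProd theWord = bandProd theWord theCenters ∧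
      IsQuasipositive (wordProd theWord) := by
  have hoff : offCenterPrefix theWord theCenters (theWord.length + 1) =
      [(1, false), (1, false), (1, true), (1, true)] := by decide
  have heq : wordProd theWord = bandProd theWord theCenters := by
    rw [bandProd_eq_wordProd_mul_inv theWord (by decide) (by decide) (by decide), hoff]
    simp [wordProd, letterEl]
  exact ⟨heq, heq ▸ isQuasipositive_bandProd theWord theCenters (by decide)⟩
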